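/- arXiv:1909.05795 — 4 statements merged into one kernel-verified Lean document; each statement's English description precedes it below -/
import Mathlib

section
/- Let f ∈ Γ₀(ℝⁿ) and r > 0. Then f = e_r f + c for some constant c ∈ ℝ if and only if f is an affine function, i.e., f(x) = ⟨a, x⟩ + b for some a ∈ ℝⁿ, b ∈ ℝ. -/
/-!
If `f = e_r f + c`, then `f` is finite and `f x ≤ f y + r/2 ‖x - y‖² + c`, which together with
convexity makes `f` Lipschitz with constant `M = √(2rc)`. For every `x` a proximal point `p`
exists and `g = r (x - p)` is a subgradient at `p`; the envelope gap `r/2 ‖x - p‖² + c` can only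
fit under the Lipschitz bound if `‖g‖ = M`, and then `g` is a subgradient at `x` as well.
Monotonicity of the subdifferential propagates `g` along the ray `x - (k/r) g`, and along such a
ray it forces every subgradient of norm at most `M`, at any point, to equal `g`. So `g` is a
subgradient everywhere and `f` is affine. Conversely, the envelope of `⟪a, ·⟫ + b` is the function
itself minus `‖a‖² / (2r)`, attained at `x - a / r`.
-/

/-- Convexity for extended-real-valued functions. -/
def EConvexOn {n : ℕ} (f : EuclideanSpace ℝ (Fin n) → EReal) : Prop :=
  ∀ x y : EuclideanSpace ℝ (Fin n), ∀ θ : ℝ, 0 ≤ θ → θ ≤ 1 →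
    f (θ • x + (1 - θ) • y) ≤ ((θ : ℝ) : EReal) * f x + (((1 - θ : ℝ)) : EReal) * f y

open Set Filter Topology
open scoped RealInnerProductSpace

theorem le_two_mul_sqrt_mul_of_forall_le_mul_add_div {A a b : ℝ} (ha : 0 ≤ a) (hb : 0 ≤ b)
    (h : ∀ t, 0 < t → A ≤ a * t + b / t) : A ≤ 2 * √(a * b) := by
  -- perturbing `a, b` makes the minimiser `t = √(ab) / a` available even when `a b = 0`
  have hε : ∀ ε, 0 < ε → A ≤ 2 * √((a + ε) * (b + ε)) := by
    intro ε hε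
    have hs : 0 < √((a + ε) * (b + ε)) := Real.sqrt_pos.2 (by positivity)
    have hss := Real.mul_self_sqrt (by positivity : 0 ≤ (a + ε) * (b + ε))
    set s := √((a + ε) * (b + ε))
    calc A ≤ a * (s / (a + ε)) + b / (s / (a + ε)) := h _ (by positivity)
      _ ≤ (a + ε) * (s / (a + ε)) + (b + ε) / (s / (a + ε)) := by gcongr <;> linarith
      _ = 2 * s := by field_simp; nlinarith
  have hlim : Tendsto (fun ε => 2 * √((a + ε) * (b + ε))) (𝓝[>] 0) (𝓝 (2 * √(a * b))) :=
    tendsto_nhdsWithin_of_tendsto_nhds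
      ((by fun_prop : Continuous fun ε : ℝ => 2 * √((a + ε) * (b + ε))).tendsto' 0 _ (by simp))
  exact ge_of_tendsto hlim (eventually_nhdsWithin_of_forall hε)

section NormedAddCommGroup

variable {E : Type*} [NormedAddCommGroup E] {F : E → ℝ}

def IsProx (F : E → ℝ) (r : ℝ) (x p : E) : Prop :=
  ∀ y, F p + r / 2 * ‖p - x‖ ^ 2 ≤ F y + r / 2 * ‖y - x‖ ^ 2

theorem exists_isProx_of_le_add_mul_norm [ProperSpace E] {M r : ℝ}
    (hlip : ∀ x y, F x ≤ F y + M * ‖x - y‖) (hr : 0 < r) (x : E) : ∃ p, IsProx F r x p := by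
  have hcont : Continuous F :=
    (LipschitzWith.of_le_add_mul' M fun x y => by simpa [dist_eq_norm] using hlip x y).continuous
  refine Continuous.exists_forall_le' (by fun_prop) x ?_
  filter_upwards [(isCompact_closedBall x (2 * M / r)).compl_mem_cocompact] with y hy
  rw [mem_compl_iff, Metric.mem_closedBall, not_le, dist_eq_norm, div_lt_iff₀ hr] at hy
  have h := hlip x y
  rw [norm_sub_rev] at h
  simp only [sub_self, norm_zero]
  nlinarith [norm_nonneg (y - x)]

theorem ConvexOn.sub_le_of_le_add_sq_norm [NormedSpace ℝ E] (hF : ConvexOn ℝ univ F) {r c : ℝ}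
    (hquad : ∀ x y, F x ≤ F y + r / 2 * ‖x - y‖ ^ 2 + c) (x y : E) {t : ℝ} (ht : 0 < t) :
    F x - F y ≤ r / 2 * ‖x - y‖ ^ 2 * t + c / t := by
  -- `x` lies on the segment from `p` to `y`, at distance `t ‖x - y‖` from `p`
  set p := x + t • (x - y)
  have hx : (1 / (1 + t)) • p + (t / (1 + t)) • y = x := by
    simp only [p]
    match_scalars <;> field_simp; ring
  have hconv := hF.2 (mem_univ p) (mem_univ y) (by positivity) (by positivity)
    (by field_simp : 1 / (1 + t) + t / (1 + t) = 1)
  rw [hx, smul_eq_mul, smul_eq_mul, div_mul_eq_mul_div, div_mul_eq_mul_div, ← add_div,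
    le_div_iff₀ (by positivity)] at hconv
  have hp := hquad p x
  rw [show p - x = t • (x - y) by simp [p], norm_smul, Real.norm_of_nonneg ht.le] at hp
  rw [show r / 2 * ‖x - y‖ ^ 2 * t + c / t = (r / 2 * (t * ‖x - y‖) ^ 2 + c) / t by
    field_simp, le_div_iff₀ ht]
  linarith

theorem ConvexOn.le_add_sqrt_mul_norm_of_le_add_sq_norm [NormedSpace ℝ E]
    (hF : ConvexOn ℝ univ F) {r c : ℝ} (hr : 0 ≤ r)
    (hquad : ∀ x y, F x ≤ F y + r / 2 * ‖x - y‖ ^ 2 + c) (x y : E) :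
    F x ≤ F y + √(2 * r * c) * ‖x - y‖ := by
  have hc : 0 ≤ c := by simpa using hquad x x
  have h := le_two_mul_sqrt_mul_of_forall_le_mul_add_div (by positivity) hc
    fun t ht => hF.sub_le_of_le_add_sq_norm hquad x y ht
  rw [show r / 2 * ‖x - y‖ ^ 2 * c = 2 * r * c * (‖x - y‖ / 2) ^ 2 by ring,
    Real.sqrt_mul (by positivity), Real.sqrt_sq (by positivity)] at h
  linarith

end NormedAddCommGroup

section InnerProductSpace

variable {E : Type*} [NormedAddCommGroup E] [InnerProductSpace ℝ E] {F : E → ℝ}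

def HasSubgradientAt (F : E → ℝ) (g x : E) : Prop :=
  ∀ z, F x + ⟪g, z - x⟫ ≤ F z

theorem HasSubgradientAt.inner_sub_nonneg {g h a b : E} (ha : HasSubgradientAt F g a)
    (hb : HasSubgradientAt F h b) : 0 ≤ ⟪g - h, a - b⟫ := by
  have h₁ := ha b
  have h₂ := hb a
  simp only [inner_sub_left, inner_sub_right] at *
  linarith

theorem eq_of_norm_le_of_sq_norm_le_inner {g h : E} (hn : ‖h‖ ≤ ‖g‖) (hi : ‖g‖ ^ 2 ≤ ⟪h, g⟫) :
    h = g := by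
  have hsq : ‖h - g‖ ^ 2 ≤ 0 := by
    rw [norm_sub_sq_real]
    nlinarith [norm_nonneg h]
  rw [← sub_eq_zero, ← norm_eq_zero]
  exact pow_eq_zero_iff two_ne_zero |>.1 (le_antisymm hsq (sq_nonneg _))

theorem eq_inner_add_of_forall_hasSubgradientAt {g : E} (h : ∀ x, HasSubgradientAt F g x)
    (x : E) : F x = ⟪g, x⟫ + F 0 := by
  have h₁ := h 0 x
  have h₂ := h x 0
  simp only [sub_zero, zero_sub, inner_neg_right] at h₁ h₂
  linarith

theorem HasSubgradientAt.sub_nat_mul_smul {g x : E} {s : ℝ} (hx : HasSubgradientAt F g x)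
    (hs : 0 < s) (hstep : ∀ y, ∃ g', ‖g'‖ = ‖g‖ ∧ HasSubgradientAt F g' (y - s • g')) (k : ℕ) :
    HasSubgradientAt F g (x - (k * s) • g) := by
  induction k with
  | zero => simpa using hx
  | succ k ih =>
    obtain ⟨g', hg', hy⟩ := hstep (x - (k * s) • g)
    have hmono := ih.inner_sub_nonneg hy
    rw [sub_sub_cancel, real_inner_smul_right, inner_sub_left, real_inner_self_eq_norm_sq] at hmono
    obtain rfl : g = g' := eq_of_norm_le_of_sq_norm_le_inner hg'.ge (by nlinarith)
    rwa [show x - ((k + 1 : ℕ) * s) • g = x - (k * s) • g - s • g by push_cast; module]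

theorem HasSubgradientAt.eq_of_sub_nat_mul_smul {g h x z : E} {s : ℝ}
    (hz : HasSubgradientAt F h z) (hs : 0 < s)
    (hg : ∀ k : ℕ, HasSubgradientAt F g (x - (k * s) • g)) (hn : ‖h‖ ≤ ‖g‖) : h = g := by
  refine eq_of_norm_le_of_sq_norm_le_inner hn (not_lt.1 fun hlt => ?_)
  have hB : 0 < s * (‖g‖ ^ 2 - ⟪h, g⟫) := mul_pos hs (by linarith)
  obtain ⟨k, hk⟩ := exists_nat_gt (⟪h - g, z - x⟫ / (s * (‖g‖ ^ 2 - ⟪h, g⟫)))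
  rw [div_lt_iff₀ hB] at hk
  have hmono := hz.inner_sub_nonneg (hg k)
  have e : ⟪h - g, z - (x - (k * s) • g)⟫ = ⟪h - g, z - x⟫ - k * (s * (‖g‖ ^ 2 - ⟪h, g⟫)) := by
    simp only [inner_sub_left, inner_sub_right, real_inner_smul_right, real_inner_self_eq_norm_sq]
    ring
  linarith

theorem ConvexOn.hasSubgradientAt_of_isProx (hF : ConvexOn ℝ univ F) {r : ℝ} {x p : E}
    (hp : IsProx F r x p) : HasSubgradientAt F (r • (x - p)) p := by
  intro z
  have key : ∀ t ∈ Ioo (0 : ℝ) 1,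
      F p + r * ⟪x - p, z - p⟫ ≤ F z + r / 2 * ‖z - p‖ ^ 2 * t := by
    rintro t ⟨ht₀, ht₁⟩
    have hconv := hF.2 (mem_univ p) (mem_univ z) (by linarith : 0 ≤ 1 - t) ht₀.le (by ring)
    have hmin := hp ((1 - t) • p + t • z)
    rw [show (1 - t) • p + t • z - x = (p - x) + t • (z - p) by module, norm_add_sq_real,
      norm_smul, real_inner_smul_right, Real.norm_of_nonneg ht₀.le] at hmin
    rw [show x - p = -(p - x) by abel, inner_neg_left]
    simp only [smul_eq_mul] at hconv
    refine le_of_mul_le_mul_left ?_ ht₀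
    nlinarith
  rw [real_inner_smul_left]
  refine ge_of_tendsto ?_ (eventually_of_mem (Ioo_mem_nhdsGT one_pos) key)
  exact tendsto_nhdsWithin_of_tendsto_nhds
    ((by fun_prop : Continuous fun t : ℝ => F z + r / 2 * ‖z - p‖ ^ 2 * t).tendsto' 0 _ (by simp))

theorem ConvexOn.exists_hasSubgradientAt_of_isGLB [ProperSpace E] (hF : ConvexOn ℝ univ F)
    {r c : ℝ} (hr : 0 < r)
    (henv : ∀ x, IsGLB (range fun y => F y + r / 2 * ‖y - x‖ ^ 2) (F x - c)) (x : E) :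
    ∃ g, ‖g‖ = √(2 * r * c) ∧ HasSubgradientAt F g x ∧ HasSubgradientAt F g (x - r⁻¹ • g) := by
  have hquad : ∀ x y, F x ≤ F y + r / 2 * ‖x - y‖ ^ 2 + c := fun x y => by
    have := (henv x).1 (mem_range_self y)
    rw [norm_sub_rev]
    linarith
  have hc : 0 ≤ c := by simpa using hquad x x
  have hlip := hF.le_add_sqrt_mul_norm_of_le_add_sq_norm hr.le hquad
  have hM : √(2 * r * c) ^ 2 = 2 * r * c := Real.sq_sqrt (by positivity)
  obtain ⟨p, hp⟩ := exists_isProx_of_le_add_mul_norm hlip hr x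
  have hval : F p + r / 2 * ‖p - x‖ ^ 2 ≤ F x - c :=
    (henv x).2 (by rintro _ ⟨y, rfl⟩; exact hp y)
  have hxp := hlip x p
  rw [norm_sub_rev] at hval
  set M := √(2 * r * c)
  set d := ‖x - p‖
  have hrd : r * d = M := by
    have hsq : (r * d - M) ^ 2 ≤ 0 := by nlinarith
    linarith [pow_eq_zero_iff two_ne_zero |>.1 (le_antisymm hsq (sq_nonneg _))]
  have hsub := hF.hasSubgradientAt_of_isProx hp
  refine ⟨r • (x - p), by rw [norm_smul, Real.norm_of_nonneg hr.le, hrd], fun z => ?_, ?_⟩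
  · have e : ⟪r • (x - p), z - x⟫ = ⟪r • (x - p), z - p⟫ - M * d := by
      rw [show z - x = (z - p) - (x - p) by abel, inner_sub_right, real_inner_smul_left,
        real_inner_smul_left, real_inner_self_eq_norm_sq, ← hrd]
      ring
    linarith [hsub z]
  · rwa [inv_smul_smul₀ hr.ne', sub_sub_cancel]

theorem ConvexOn.exists_eq_inner_add_of_isGLB [ProperSpace E] (hF : ConvexOn ℝ univ F)
    {r c : ℝ} (hr : 0 < r)
    (henv : ∀ x, IsGLB (range fun y => F y + r / 2 * ‖y - x‖ ^ 2) (F x - c)) :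
    ∃ (a : E) (b : ℝ), ∀ x, F x = ⟪a, x⟫ + b := by
  have hdir := hF.exists_hasSubgradientAt_of_isGLB hr henv
  obtain ⟨g, hgM, hg, -⟩ := hdir 0
  have hray := hg.sub_nat_mul_smul (inv_pos.2 hr) fun y => by
    obtain ⟨g', hg'M, -, hy⟩ := hdir y
    exact ⟨g', hg'M.trans hgM.symm, hy⟩
  have hall : ∀ z, HasSubgradientAt F g z := fun z => by
    obtain ⟨h, hhM, hz, -⟩ := hdir z
    rwa [← hz.eq_of_sub_nat_mul_smul (inv_pos.2 hr) hray (hhM.trans hgM.symm).le]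
  exact ⟨g, F 0, eq_inner_add_of_forall_hasSubgradientAt hall⟩

theorem isLeast_inner_add_add_sq_norm (a x : E) (b : ℝ) {r : ℝ} (hr : 0 < r) :
    IsLeast (range fun y => ⟪a, y⟫ + b + r / 2 * ‖y - x‖ ^ 2)
      (⟪a, x⟫ + b - ‖a‖ ^ 2 / (2 * r)) := by
  refine ⟨⟨x - r⁻¹ • a, ?_⟩, ?_⟩
  · simp only [sub_sub_cancel_left, norm_neg, norm_smul, inner_sub_right, real_inner_smul_right,
      real_inner_self_eq_norm_sq, Real.norm_of_nonneg (inv_nonneg.2 hr.le)]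
    field_simp
    ring
  · rintro _ ⟨y, rfl⟩
    have h := sq_nonneg ‖r • (y - x) + a‖
    rw [norm_add_sq_real, norm_smul, real_inner_smul_left, Real.norm_of_nonneg hr.le,
      real_inner_comm, inner_sub_right] at h
    have e : ⟪a, y⟫ + b + r / 2 * ‖y - x‖ ^ 2 - (⟪a, x⟫ + b - ‖a‖ ^ 2 / (2 * r)) =
        ((r * ‖y - x‖) ^ 2 + 2 * (r * (⟪a, y⟫ - ⟪a, x⟫)) + ‖a‖ ^ 2) / (2 * r) := by
      field_simp
      ring
    dsimp only
    linarith [div_nonneg h (by positivity : (0 : ℝ) ≤ 2 * r)]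

end InnerProductSpace

theorem EReal.isGLB_range_of_iInf_coe_eq {ι : Sort*} {u : ι → ℝ} {m : ℝ}
    (h : ⨅ i, (u i : EReal) = m) : IsGLB (range u) m := by
  refine ⟨?_, fun b hb => ?_⟩
  · rintro _ ⟨i, rfl⟩
    exact EReal.coe_le_coe_iff.1 (h ▸ iInf_le _ i)
  · exact EReal.coe_le_coe_iff.1 (h ▸ le_iInf fun i => EReal.coe_le_coe_iff.2 (hb ⟨i, rfl⟩))

theorem EReal.iInf_coe_eq_of_isLeast {ι : Sort*} {u : ι → ℝ} {m : ℝ} (h : IsLeast (range u) m) :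
    ⨅ i, (u i : EReal) = m := by
  obtain ⟨⟨i, hi⟩, hm⟩ := h
  exact le_antisymm (iInf_le_of_le i (by rw [hi]))
    (le_iInf fun j => EReal.coe_le_coe_iff.2 (hm ⟨j, rfl⟩))

theorem ne_top_of_eq_iInf_add_coe {α : Type*} {f : α → EReal} {q : α → α → ℝ} {c : ℝ}
    (hc : ∀ x, f x = (⨅ y, f y + (q y x : EReal)) + c) {x₀ : α} (hx₀ : f x₀ ≠ ⊤) (x : α) :
    f x ≠ ⊤ := by
  rw [hc x]
  exact ne_top_of_le_ne_top
    (EReal.add_ne_top (EReal.add_ne_top hx₀ (EReal.coe_ne_top _)) (EReal.coe_ne_top _))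
    (add_le_add (iInf_le _ x₀) le_rfl)

theorem EConvexOn.convexOn_of_eq_coe {n : ℕ} {f : EuclideanSpace ℝ (Fin n) → EReal}
    {F : EuclideanSpace ℝ (Fin n) → ℝ} (hconv : EConvexOn f) (hf : ∀ x, f x = F x) :
    ConvexOn ℝ univ F := by
  refine ⟨convex_univ, fun x _ y _ a b ha hb hab => ?_⟩
  obtain rfl : b = 1 - a := by linarith
  have h := hconv x y a ha (by linarith)
  simp only [hf, ← EReal.coe_mul, ← EReal.coe_add, EReal.coe_le_coe_iff] at h
  exact h

theorem eq_moreau_envelope_add_const_iff_affine_general {n : ℕ}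
    (f : EuclideanSpace ℝ (Fin n) → EReal)
    (hproper : ∃ x, f x ≠ ⊤) (hnb : ∀ x, f x ≠ ⊥) (hconv : EConvexOn f)
    (r : ℝ) (hr : 0 < r) :
    (∃ c : ℝ, ∀ x, f x =
        (⨅ y, f y + (((r / 2) * ‖y - x‖ ^ 2 : ℝ) : EReal)) + ((c : ℝ) : EReal)) ↔
      (∃ (a : EuclideanSpace ℝ (Fin n)) (b : ℝ),
        ∀ x, f x = (((inner ℝ a x : ℝ) + b : ℝ) : EReal)) := by
  constructor
  · rintro ⟨c, hc⟩
    obtain ⟨x₀, hx₀⟩ := hproper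
    have hfin := ne_top_of_eq_iInf_add_coe (q := fun y x => r / 2 * ‖y - x‖ ^ 2) hc hx₀
    obtain ⟨F, hf⟩ : ∃ F : EuclideanSpace ℝ (Fin n) → ℝ, ∀ x, f x = F x :=
      ⟨fun x => (f x).toReal, fun x => (EReal.coe_toReal (hfin x) (hnb x)).symm⟩
    have henv (x) : IsGLB (range fun y => F y + r / 2 * ‖y - x‖ ^ 2) (F x - c) := by
      refine EReal.isGLB_range_of_iInf_coe_eq ?_
      have h := hc x
      simp only [hf, ← EReal.coe_add] at h ⊢
      rw [EReal.coe_sub, h, EReal.add_sub_cancel_right]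
    obtain ⟨a, b, hab⟩ := (hconv.convexOn_of_eq_coe hf).exists_eq_inner_add_of_isGLB hr henv
    exact ⟨a, b, fun x => by rw [hf, hab]⟩
  · rintro ⟨a, b, hab⟩
    refine ⟨‖a‖ ^ 2 / (2 * r), fun x => ?_⟩
    simp only [hab, ← EReal.coe_add]
    rw [EReal.iInf_coe_eq_of_isLeast (isLeast_inner_add_add_sq_norm a x b hr), ← EReal.coe_add,
      sub_add_cancel]

/-- For proper lsc convex `f`, `f = e_r f + c` for some constant `c` iff `f` is affine. -/
theorem eq_moreau_envelope_add_const_iff_affine {n : ℕ}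
    (f : EuclideanSpace ℝ (Fin n) → EReal) (hlsc : LowerSemicontinuous f)
    (hproper : ∃ x, f x ≠ ⊤) (hnb : ∀ x, f x ≠ ⊥) (hconv : EConvexOn f)
    (r : ℝ) (hr : 0 < r) :
    (∃ c : ℝ, ∀ x, f x =
        (⨅ y, f y + (((r / 2) * ‖y - x‖ ^ 2 : ℝ) : EReal)) + ((c : ℝ) : EReal)) ↔
      (∃ (a : EuclideanSpace ℝ (Fin n)) (b : ℝ),
        ∀ x, f x = (((inner ℝ a x : ℝ) + b : ℝ) : EReal)) :=
  eq_moreau_envelope_add_const_iff_affine_general f hproper hnb hconv r hr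
end

section
/- Let f ∈ Γ₀(ℝⁿ) be of class C^k on ℝⁿ with k ≥ 1. Then for any r > 0, the Moreau envelope e_r f is of class C^k. -/
/-!
The minimiser `p x` of `y ↦ f y + r/2 ‖y - x‖²` exists by coercivity and is characterised by
`p x + r⁻¹ ∇f (p x) = x`, so `p` inverts `F = id + r⁻¹ ∇f`. Monotonicity of `∇f` makes `F`
strongly monotone, hence `p` is 1-Lipschitz and every derivative of `F` is invertible, so `p` is
`C^(k-1)` by the inverse function theorem. Testing the envelope at `x` and `y` against the
competitors `p y` and `p x` pins it between two quadratics, giving `∇ e_r f x = r (x - p x)`,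
which is `C^(k-1)`.
-/

open Filter Topology Set InnerProductSpace Asymptotics
open scoped RealInnerProductSpace Gradient

section Convex

variable {E : Type*} [NormedAddCommGroup E] [InnerProductSpace ℝ E] [CompleteSpace E]

theorem ConvexOn.add_inner_gradient_le {f : E → ℝ} (hconv : ConvexOn ℝ univ f) {a : E}
    (hf : DifferentiableAt ℝ f a) (b : E) : f a + ⟪∇ f a, b - a⟫ ≤ f b := by
  have hline : HasDerivAt (f ∘ AffineMap.lineMap a b) ⟪∇ f a, b - a⟫ (0 : ℝ) := by
    have := hf.hasGradientAt.hasFDerivAt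
    rw [← AffineMap.lineMap_apply_zero a b (k := ℝ)] at this
    simpa using this.comp_hasDerivAt (0 : ℝ) AffineMap.hasDerivAt_lineMap
  have := (hconv.comp_affineMap (AffineMap.lineMap a b)).le_slope_of_hasDerivAt
    (mem_univ 0) (mem_univ 1) zero_lt_one hline
  simp only [slope_def_field, Function.comp_apply, AffineMap.lineMap_apply_zero,
    AffineMap.lineMap_apply_one, sub_zero, div_one] at this
  linarith

theorem ConvexOn.inner_gradient_sub_gradient_nonneg {f : E → ℝ} (hconv : ConvexOn ℝ univ f)
    (hf : Differentiable ℝ f) (a b : E) : 0 ≤ ⟪∇ f a - ∇ f b, a - b⟫ := by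
  have hab := hconv.add_inner_gradient_le (hf a) b
  have hba := hconv.add_inner_gradient_le (hf b) a
  rw [← neg_sub a b, inner_neg_right] at hab
  rw [inner_sub_left]
  linarith

theorem ConvexOn.sq_norm_sub_le_inner_add_smul_gradient {f : E → ℝ} (hconv : ConvexOn ℝ univ f)
    (hf : Differentiable ℝ f) {c : ℝ} (hc : 0 ≤ c) (a b : E) :
    ‖a - b‖ ^ 2 ≤ ⟪(a + c • ∇ f a) - (b + c • ∇ f b), a - b⟫ := by
  have : (a + c • ∇ f a) - (b + c • ∇ f b) = (a - b) + c • (∇ f a - ∇ f b) := by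
    rw [smul_sub]; abel
  rw [this, inner_add_left, real_inner_smul_left, real_inner_self_eq_norm_sq]
  have := mul_nonneg hc (hconv.inner_gradient_sub_gradient_nonneg hf a b)
  linarith

end Convex

theorem ConvexOn.exists_isMinOn_add_sq_norm_sub {E : Type*} [NormedAddCommGroup E]
    [InnerProductSpace ℝ E] [ProperSpace E] {f : E → ℝ}
    (hconv : ConvexOn ℝ univ f) (hf : Differentiable ℝ f) {r : ℝ} (hr : 0 < r) (x : E) :
    ∃ p, IsMinOn (fun y => f y + r / 2 * ‖y - x‖ ^ 2) univ p := by
  set c := ‖∇ f 0‖ + r * ‖x‖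
  have hlow : ∀ y, f 0 + ‖y‖ * (r / 2 * ‖y‖ - c) ≤ f y + r / 2 * ‖y - x‖ ^ 2 := by
    intro y
    have hf0 := hconv.add_inner_gradient_le (hf 0) y
    rw [sub_zero] at hf0
    have hgrad := neg_le_of_abs_le (abs_real_inner_le_norm (∇ f 0) y)
    have hyx := real_inner_le_norm y x
    rw [norm_sub_sq_real]
    nlinarith [sq_nonneg ‖x‖]
  have htend : Tendsto (fun t : ℝ => f 0 + t * (r / 2 * t - c)) atTop atTop :=
    tendsto_atTop_add_const_left _ _ <| tendsto_id.atTop_mul_atTop₀ <|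
      tendsto_atTop_add_const_right _ _ (tendsto_id.const_mul_atTop (half_pos hr))
  obtain ⟨p, hp⟩ := (hf.continuous.add (by fun_prop)).exists_forall_le
    (tendsto_atTop_mono hlow (htend.comp tendsto_norm_cocompact_atTop))
  exact ⟨p, fun y _ => hp y⟩

theorem IsMinOn.add_inv_smul_gradient_eq {E : Type*} [NormedAddCommGroup E]
    [InnerProductSpace ℝ E] [CompleteSpace E] {f : E → ℝ} {r : ℝ} {x p : E}
    (hp : IsMinOn (fun y => f y + r / 2 * ‖y - x‖ ^ 2) univ p) (hf : DifferentiableAt ℝ f p)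
    (hr : r ≠ 0) : p + r⁻¹ • ∇ f p = x := by
  have hderiv : HasFDerivAt (fun y => f y + r / 2 * ‖y - x‖ ^ 2)
      (toDual ℝ E (∇ f p + r • (p - x))) p := by
    refine (hf.hasGradientAt.hasFDerivAt.add
      ((((hasFDerivAt_id p).sub_const x).norm_sq).const_mul (r / 2))).congr_fderiv ?_
    ext w
    simp only [add_apply, smul_apply,
      ContinuousLinearMap.comp_apply, ContinuousLinearMap.id_apply, coe_innerSL_apply,
      toDual_apply_apply, toDual_gradient, map_add, map_smul, id_eq, nsmul_eq_mul, smul_eq_mul]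
    ring
  have hzero : ∇ f p + r • (p - x) = 0 :=
    (toDual ℝ E).map_eq_zero_iff.1 ((hp.isLocalMin univ_mem).hasFDerivAt_eq_zero hderiv)
  rw [add_eq_zero_iff_eq_neg, ← smul_neg, neg_sub] at hzero
  rw [hzero, inv_smul_smul₀ hr, add_sub_cancel]

theorem hasFDerivAt_of_norm_sub_le_sq {𝕜 E F : Type*} [NontriviallyNormedField 𝕜]
    [NormedAddCommGroup E] [NormedSpace 𝕜 E] [NormedAddCommGroup F] [NormedSpace 𝕜 F]
    {m : E → F} {L : E →L[𝕜] F} {x : E} {C : ℝ}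
    (h : ∀ y, ‖m y - m x - L (y - x)‖ ≤ C * ‖y - x‖ ^ 2) : HasFDerivAt m L x := by
  rw [hasFDerivAt_iff_isLittleO_nhds_zero]
  refine (IsBigO.of_bound C (Eventually.of_forall fun v => ?_)).trans_isLittleO
    (isLittleO_norm_pow_id one_lt_two)
  simpa using h (x + v)

section StronglyMonotone

variable {E : Type*} [NormedAddCommGroup E] [InnerProductSpace ℝ E] {F : E → E}

theorem norm_sub_le_norm_sub_of_sq_le_inner (hF : ∀ a b, ‖a - b‖ ^ 2 ≤ ⟪F a - F b, a - b⟫)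
    (a b : E) : ‖a - b‖ ≤ ‖F a - F b‖ := by
  rcases (norm_nonneg (a - b)).eq_or_lt with h0 | h0
  · rw [← h0]; exact norm_nonneg _
  · refine le_of_mul_le_mul_right ?_ h0
    rw [← sq]
    exact (hF a b).trans (real_inner_le_norm _ _)

theorem injective_of_sq_le_inner (hF : ∀ a b, ‖a - b‖ ^ 2 ≤ ⟪F a - F b, a - b⟫) :
    Function.Injective F := fun a b hab => by
  simpa [hab, sub_eq_zero] using norm_sub_le_norm_sub_of_sq_le_inner hF a b

theorem lipschitzWith_one_of_rightInverse_of_sq_le_inner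
    (hF : ∀ a b, ‖a - b‖ ^ 2 ≤ ⟪F a - F b, a - b⟫) {p : E → E} (hp : Function.RightInverse p F) :
    LipschitzWith 1 p :=
  LipschitzWith.of_dist_le_mul fun a b => by
    simpa [dist_eq_norm, hp a, hp b] using norm_sub_le_norm_sub_of_sq_le_inner hF (p a) (p b)

theorem HasFDerivAt.sq_norm_le_inner_apply_of_sq_le_inner
    (hF : ∀ a b, ‖a - b‖ ^ 2 ≤ ⟪F a - F b, a - b⟫) {A : E →L[ℝ] E} {y : E}
    (hA : HasFDerivAt F A y) (v : E) : ‖v‖ ^ 2 ≤ ⟪A v, v⟫ := by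
  have hlim : Tendsto (fun n : ℕ => ⟪(n : ℝ) • (F (y + (n : ℝ)⁻¹ • v) - F y), v⟫) atTop
      (𝓝 ⟪A v, v⟫) :=
    (hA.lim v (by simpa using tendsto_natCast_atTop_atTop)).inner tendsto_const_nhds
  refine ge_of_tendsto hlim (eventually_gt_atTop 0 |>.mono fun n hn => ?_)
  have hn' : (0 : ℝ) < n := by exact_mod_cast hn
  have h := hF (y + (n : ℝ)⁻¹ • v) y
  rw [add_sub_cancel_left, norm_smul, mul_pow, real_inner_smul_right, Real.norm_eq_abs,
    sq_abs] at h
  rw [real_inner_smul_left]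
  calc ‖v‖ ^ 2 = n * n * ((n : ℝ)⁻¹ ^ 2 * ‖v‖ ^ 2) := by field_simp
    _ ≤ n * n * ((n : ℝ)⁻¹ * ⟪F (y + (n : ℝ)⁻¹ • v) - F y, v⟫) := by gcongr
    _ = _ := by field_simp

theorem contDiff_of_rightInverse_of_sq_le_inner [FiniteDimensional ℝ E] {n : WithTop ℕ∞}
    (hF : ∀ a b, ‖a - b‖ ^ 2 ≤ ⟪F a - F b, a - b⟫) (hFn : ContDiff ℝ n F) {p : E → E}
    (hp : Function.RightInverse p F) : ContDiff ℝ n p := by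
  have hlip := lipschitzWith_one_of_rightInverse_of_sq_le_inner hF hp
  rcases eq_or_ne n 0 with rfl | hn
  · exact contDiff_zero.2 hlip.continuous
  have hderiv (a : E) : HasFDerivAt F (fderiv ℝ F a) a :=
    (hFn.differentiable hn a).hasFDerivAt
  have hinj (a : E) : Function.Injective (fderiv ℝ F a) :=
    injective_of_sq_le_inner fun v w => by
      simpa only [← map_sub] using (hderiv a).sq_norm_le_inner_apply_of_sq_le_inner hF (v - w)
  let Φ : E ≃ₜ E :=
    { toFun := F
      invFun := p
      left_inv := fun a => injective_of_sq_le_inner hF (hp (F a))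
      right_inv := hp
      continuous_toFun := hFn.continuous
      continuous_invFun := hlip.continuous }
  exact Φ.contDiff_symm
    (f₀' := fun a => (LinearEquiv.ofInjectiveEndo _ (hinj a)).toContinuousLinearEquiv) hderiv hFn

end StronglyMonotone

noncomputable def moreauEnvelope {E : Type*} [SeminormedAddCommGroup E] (f : E → ℝ) (r : ℝ)
    (x : E) : ℝ :=
  ⨅ y, f y + r / 2 * ‖y - x‖ ^ 2

theorem moreauEnvelope_eq_of_isMinOn {E : Type*} [SeminormedAddCommGroup E] {f : E → ℝ} {r : ℝ}
    {x p : E} (hp : IsMinOn (fun y => f y + r / 2 * ‖y - x‖ ^ 2) univ p) :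
    moreauEnvelope f r x = f p + r / 2 * ‖p - x‖ ^ 2 :=
  le_antisymm (ciInf_le ⟨_, forall_mem_range.2 fun y => hp (mem_univ y)⟩ p)
    (le_ciInf fun y => hp (mem_univ y))

section Gradient

variable {E : Type*} [NormedAddCommGroup E] [InnerProductSpace ℝ E] [CompleteSpace E]

theorem hasGradientAt_moreauEnvelope {f : E → ℝ} {r : ℝ} (hr : 0 ≤ r) {p : E → E}
    (hp : ∀ x, IsMinOn (fun y => f y + r / 2 * ‖y - x‖ ^ 2) univ (p x)) (hlip : LipschitzWith 1 p)
    (x : E) : HasGradientAt (moreauEnvelope f r) (r • (x - p x)) x := by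
  rw [hasGradientAt_iff_hasFDerivAt]
  refine hasFDerivAt_of_norm_sub_le_sq (C := r / 2) fun y => ?_
  have hx := moreauEnvelope_eq_of_isMinOn (hp x)
  have hy := moreauEnvelope_eq_of_isMinOn (hp y)
  have hupper : f (p y) + r / 2 * ‖p y - y‖ ^ 2 ≤ f (p x) + r / 2 * ‖p x - y‖ ^ 2 :=
    hp y (mem_univ _)
  have hlower : f (p x) + r / 2 * ‖p x - x‖ ^ 2 ≤ f (p y) + r / 2 * ‖p y - x‖ ^ 2 :=
    hp x (mem_univ _)
  have hnonexp : ⟪p y - p x, y - x⟫ ≤ ‖y - x‖ ^ 2 := by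
    have := hlip.norm_sub_le y x
    rw [NNReal.coe_one, one_mul] at this
    exact (real_inner_le_norm _ _).trans (by nlinarith [norm_nonneg (y - x)])
  rw [show p x - y = (p x - x) - (y - x) by abel, norm_sub_sq_real (p x - x)] at hupper
  rw [show p y - x = (p y - y) + (y - x) by abel, norm_add_sq_real (p y - y)] at hlower
  have hsplit : ⟪p y - y, y - x⟫ = ⟪p y - p x, y - x⟫ + ⟪p x - x, y - x⟫ - ‖y - x‖ ^ 2 := by
    rw [show p y - y = (p y - p x) + (p x - x) - (y - x) by abel, inner_sub_left,
      inner_add_left, real_inner_self_eq_norm_sq]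
  rw [toDual_apply_apply, real_inner_smul_left, ← neg_sub (p x) x, inner_neg_left,
    Real.norm_eq_abs, abs_le]
  constructor <;> nlinarith [mul_le_mul_of_nonneg_left hnonexp hr]

theorem ContDiff.gradient {n : ℕ∞} {f : E → ℝ} (hf : ContDiff ℝ (n + 1) f) :
    ContDiff ℝ n (∇ f) :=
  ((toDual ℝ E).symm.toContinuousLinearEquiv : StrongDual ℝ E ≃L[ℝ] E).contDiff.comp
    (hf.fderiv_right le_rfl)

theorem contDiff_succ_of_hasGradientAt {n : ℕ∞} {m : E → ℝ} {g : E → E}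
    (hm : ∀ x, HasGradientAt m (g x) x) (hg : ContDiff ℝ n g) : ContDiff ℝ (n + 1) m := by
  have hfderiv : fderiv ℝ m = fun x => toDual ℝ E (g x) :=
    funext fun x => (hasGradientAt_iff_hasFDerivAt.1 (hm x)).fderiv
  rw [contDiff_succ_iff_fderiv]
  refine ⟨fun x => (hm x).differentiableAt, ?_, ?_⟩
  · simp
  · rw [hfderiv]
    exact ((toDual ℝ E).toContinuousLinearEquiv : E ≃L[ℝ] StrongDual ℝ E).contDiff.comp hg

end Gradient

theorem ConvexOn.contDiff_moreauEnvelope {E : Type*} [NormedAddCommGroup E]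
    [InnerProductSpace ℝ E] [FiniteDimensional ℝ E] {f : E → ℝ} (hconv : ConvexOn ℝ univ f)
    {k : ℕ} (hk : 1 ≤ k) (hf : ContDiff ℝ k f) {r : ℝ} (hr : 0 < r) :
    ContDiff ℝ k (moreauEnvelope f r) := by
  obtain ⟨j, rfl⟩ : ∃ j, k = j + 1 := ⟨k - 1, by omega⟩
  have hfd : Differentiable ℝ f := hf.differentiable (by simp)
  have hgrad : ContDiff ℝ j (∇ f) := ContDiff.gradient (by exact_mod_cast hf)
  choose p hp using hconv.exists_isMinOn_add_sq_norm_sub hfd hr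
  have hright : Function.RightInverse p (fun y => y + r⁻¹ • ∇ f y) := fun x =>
    (hp x).add_inv_smul_gradient_eq (hfd _) hr.ne'
  have hmono := hconv.sq_norm_sub_le_inner_add_smul_gradient hfd (inv_nonneg.2 hr.le)
  have hpj : ContDiff ℝ j p :=
    contDiff_of_rightInverse_of_sq_le_inner hmono (contDiff_id.add (hgrad.const_smul _)) hright
  have hlip := lipschitzWith_one_of_rightInverse_of_sq_le_inner hmono hright
  exact_mod_cast contDiff_succ_of_hasGradientAt (hasGradientAt_moreauEnvelope hr.le hp hlip)
    ((contDiff_id.sub hpj).const_smul r)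

/-- If `f` is convex and of class `C^k` on ℝⁿ (`k ≥ 1`), then `e_r f` is of class `C^k`. -/
theorem moreau_envelope_contDiff {n : ℕ} (f : EuclideanSpace ℝ (Fin n) → ℝ)
    (hconv : ConvexOn ℝ Set.univ f) (k : ℕ) (hk : 1 ≤ k)
    (hf : ContDiff ℝ (k : ℕ∞) f) (r : ℝ) (hr : 0 < r) :
    ContDiff ℝ (k : ℕ∞) (fun x => ⨅ y, f y + (r / 2) * ‖y - x‖ ^ 2) :=
  hconv.contDiff_moreauEnvelope hk hf hr
end

section
/- Let f₁, f₂ : ℝ → ℝ be convex and differentiable, and f the convex function equal to f₁ on (-∞, x₀] and f₂ on [x₀, ∞). Then for x in the interval [x₀ + f₁'(x₀)/r, x₀ + f₂'(x₀)/r], the Moreau envelope is e_r f(x) = f₁(x₀) + (r/2)(x₀ - x)². -/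
/-!
For `x` in the middle interval, `g = r (x - x₀)` lies between `f₁'(x₀)` and `f₂'(x₀)`, so the
tangent line inequalities of `f₁` (left of `x₀`) and `f₂` (right of `x₀`) make `g` a subgradient
of `f` at `x₀`. Expanding the square then gives
`f y + r/2 (y - x)² ≥ f x₀ + r/2 (x₀ - x)² + r/2 (y - x₀)²`, so the infimum is attained at `x₀`.
-/

open Set

lemma ConvexOn.add_deriv_mul_sub_le {f : ℝ → ℝ} {S : Set ℝ} {x y : ℝ} (hf : ConvexOn ℝ S f)
    (hx : x ∈ S) (hy : y ∈ S) (hfd : DifferentiableAt ℝ f x) :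
    f x + deriv f x * (y - x) ≤ f y := by
  rcases lt_trichotomy y x with hyx | rfl | hxy
  · have := hf.slope_le_deriv hy hx hyx hfd
    rw [slope_def_field, div_le_iff₀ (sub_pos.2 hyx)] at this
    linarith
  · simp
  · have := hf.deriv_le_slope hx hy hxy hfd
    rw [slope_def_field, le_div_iff₀ (sub_pos.2 hxy)] at this
    linarith

lemma add_mul_sub_le_of_eqOn_Iic_of_eqOn_Ici {f f₁ f₂ : ℝ → ℝ} {x₀ g : ℝ}
    (h₁c : ConvexOn ℝ (Iic x₀) f₁) (h₂c : ConvexOn ℝ (Ici x₀) f₂)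
    (h₁d : DifferentiableAt ℝ f₁ x₀) (h₂d : DifferentiableAt ℝ f₂ x₀)
    (hle : ∀ x ≤ x₀, f x = f₁ x) (hge : ∀ x, x₀ ≤ x → f x = f₂ x)
    (hg₁ : deriv f₁ x₀ ≤ g) (hg₂ : g ≤ deriv f₂ x₀) (y : ℝ) :
    f x₀ + g * (y - x₀) ≤ f y := by
  rcases le_total y x₀ with hy | hy
  · have := h₁c.add_deriv_mul_sub_le self_mem_Iic hy h₁d
    rw [hle y hy, hle x₀ le_rfl]
    nlinarith
  · have := h₂c.add_deriv_mul_sub_le self_mem_Ici hy h₂d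
    rw [hge y hy, hge x₀ le_rfl]
    nlinarith

lemma add_sq_le_of_subgradient {f : ℝ → ℝ} {x₀ x r : ℝ} (hr : 0 ≤ r)
    (hsub : ∀ y, f x₀ + r * (x - x₀) * (y - x₀) ≤ f y) (y : ℝ) :
    f x₀ + r / 2 * (x₀ - x) ^ 2 ≤ f y + r / 2 * (y - x) ^ 2 := by
  nlinarith [hsub y, mul_nonneg hr (sq_nonneg (y - x₀))]

lemma iInf_add_sq_eq_of_subgradient {f : ℝ → ℝ} {x₀ x r : ℝ} (hr : 0 ≤ r)
    (hsub : ∀ y, f x₀ + r * (x - x₀) * (y - x₀) ≤ f y) :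
    (⨅ y, f y + r / 2 * (y - x) ^ 2) = f x₀ + r / 2 * (x₀ - x) ^ 2 :=
  ciInf_eq_of_forall_ge_of_forall_gt_exists_lt (add_sq_le_of_subgradient hr hsub)
    fun _ hw => ⟨x₀, hw⟩

theorem moreau_envelope_two_piece_middle_general {f f₁ f₂ : ℝ → ℝ} {x₀ : ℝ}
    (h₁c : ConvexOn ℝ Set.univ f₁) (h₂c : ConvexOn ℝ Set.univ f₂)
    (h₁d : Differentiable ℝ f₁) (h₂d : Differentiable ℝ f₂)
    (hle : ∀ x ≤ x₀, f x = f₁ x) (hge : ∀ x, x₀ ≤ x → f x = f₂ x)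
    (r : ℝ) (hr : 0 < r)
    (x : ℝ) (hx₁ : x₀ + deriv f₁ x₀ / r ≤ x) (hx₂ : x ≤ x₀ + deriv f₂ x₀ / r) :
    (⨅ y, f y + r / 2 * (y - x) ^ 2) = f₁ x₀ + r / 2 * (x₀ - x) ^ 2 := by
  have hg₁ : deriv f₁ x₀ ≤ r * (x - x₀) := by
    rw [← div_le_iff₀' hr]
    linarith
  have hg₂ : r * (x - x₀) ≤ deriv f₂ x₀ := by
    rw [← le_div_iff₀' hr]
    linarith
  rw [← hle x₀ le_rfl]
  exact iInf_add_sq_eq_of_subgradient hr.le <|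
    add_mul_sub_le_of_eqOn_Iic_of_eqOn_Ici (h₁c.subset (subset_univ _) (convex_Iic x₀))
      (h₂c.subset (subset_univ _) (convex_Ici x₀)) (h₁d x₀) (h₂d x₀) hle hge hg₁ hg₂

/-- Moreau envelope of a two-piece convex function on the middle region:
`e_r f (x) = f₁(x₀) + (r/2)(x₀ - x)²`. -/
theorem moreau_envelope_two_piece_middle {f f₁ f₂ : ℝ → ℝ} {x₀ : ℝ}
    (h₁c : ConvexOn ℝ Set.univ f₁) (h₂c : ConvexOn ℝ Set.univ f₂)
    (h₁d : Differentiable ℝ f₁) (h₂d : Differentiable ℝ f₂)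
    (hle : ∀ x ≤ x₀, f x = f₁ x) (hge : ∀ x, x₀ ≤ x → f x = f₂ x)
    (hconv : ConvexOn ℝ Set.univ f) (r : ℝ) (hr : 0 < r)
    (x : ℝ) (hx₁ : x₀ + deriv f₁ x₀ / r ≤ x) (hx₂ : x ≤ x₀ + deriv f₂ x₀ / r) :
    (⨅ y, f y + r / 2 * (y - x) ^ 2) = f₁ x₀ + r / 2 * (x₀ - x) ^ 2 :=
  moreau_envelope_two_piece_middle_general h₁c h₂c h₁d h₂d hle hge r hr x hx₁ hx₂
end

section
/- Let f : ℝ → ℝ be a continuous piecewise cubic function with pieces f_i(x) = a_i x³ + b_i x² + c_i x + d_i on intervals D_i determined by breakpoints x₁ < ⋯ < x_{m-1} with f_i(x_i) = f_{i+1}(x_i). Then f is convex if and only if (i) each f_i is convex on D_i, and (ii) f_i'(x_i) ≤ f_{i+1}'(x_i) for each i < m. -/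
/-!
Both directions compare one-sided derivatives at the breakpoints. A convex function has left
derivative at most its right derivative at every point, and on the pieces these one-sided
derivatives of `f` are the derivatives of the polynomials. Conversely, if `f` is convex on
`(-∞, a]` and on `[a, ∞)` and its left derivative at `a` is at most its right derivative, then every
secant slope ending at `a` is at most every secant slope starting at `a`, which is exactly what is
missing to glue the two halves; induction over the breakpoints glues all the pieces.
-/

open Set Filter Topology

theorem slope_mem_Icc_of_slope_le {g : ℝ → ℝ} {u v w : ℝ} (huv : u < v) (hvw : v < w)
    (h : slope g u v ≤ slope g v w) :
    slope g u w ∈ Icc (slope g u v) (slope g v w) := by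
  simp only [slope_def_field, mem_Icc] at h ⊢
  have huv' : 0 < v - u := by linarith
  have hvw' : 0 < w - v := by linarith
  have huw' : 0 < w - u := by linarith
  rw [div_le_div_iff₀ huv' hvw'] at h
  rw [div_le_div_iff₀ huv' huw', div_le_div_iff₀ huw' hvw']
  constructor <;> nlinarith

theorem convexOn_of_convexOn_inter_Iic_Ici_of_slope_le {s : Set ℝ} {f : ℝ → ℝ} {a : ℝ}
    (hs : Convex ℝ s) (ha : a ∈ s)
    (h₁ : ConvexOn ℝ (s ∩ Iic a) f) (h₂ : ConvexOn ℝ (s ∩ Ici a) f)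
    (hsl : ∀ x ∈ s, x < a → ∀ z ∈ s, a < z → slope f x a ≤ slope f a z) :
    ConvexOn ℝ s f := by
  refine convexOn_of_slope_mono_adjacent hs fun {x y z} hx hz hxy hyz => ?_
  have hy : y ∈ s := hs.ordConnected.out hx hz ⟨hxy.le, hyz.le⟩
  rcases le_or_gt z a with hza | haz
  · exact h₁.slope_mono_adjacent ⟨hx, (hxy.trans hyz).le.trans hza⟩ ⟨hz, hza⟩ hxy hyz
  rcases le_or_gt a x with hax | hxa
  · exact h₂.slope_mono_adjacent ⟨hx, hax⟩ ⟨hz, haz.le⟩ hxy hyz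
  simp only [← slope_def_field]
  rcases lt_trichotomy y a with hya | rfl | hay
  · have hleft : slope f x y ≤ slope f y a := by
      simpa only [slope_def_field] using
        h₁.slope_mono_adjacent ⟨hx, hxa.le⟩ ⟨ha, self_mem_Iic⟩ hxy hya
    exact hleft.trans (slope_mem_Icc_of_slope_le hya haz (hsl y hy hya z hz haz)).1
  · exact hsl x hx hxa z hz haz
  · have hright : slope f a y ≤ slope f y z := by
      simpa only [slope_def_field] using
        h₂.slope_mono_adjacent ⟨ha, self_mem_Ici⟩ ⟨hz, haz.le⟩ hay hyz
    exact (slope_mem_Icc_of_slope_le hxa hay (hsl x hx hxa y hy hay)).2.trans hright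

theorem convexOn_of_convexOn_inter_Iic_Ici_of_hasDerivWithinAt {s : Set ℝ} {f : ℝ → ℝ}
    {a L R : ℝ} (hs : Convex ℝ s) (ha : a ∈ s)
    (h₁ : ConvexOn ℝ (s ∩ Iic a) f) (h₂ : ConvexOn ℝ (s ∩ Ici a) f)
    (hL : HasDerivWithinAt f L (Iio a) a) (hR : HasDerivWithinAt f R (Ioi a) a) (hLR : L ≤ R) :
    ConvexOn ℝ s f :=
  convexOn_of_convexOn_inter_Iic_Ici_of_slope_le hs ha h₁ h₂ fun x hx hxa z hz haz =>
    calc slope f x a ≤ L := h₁.slope_le_of_hasDerivWithinAt_Iio ⟨hx, hxa.le⟩ ⟨ha, self_mem_Iic⟩ hxa hL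
      _ ≤ R := hLR
      _ ≤ slope f a z := h₂.le_slope_of_hasDerivWithinAt_Ioi ⟨ha, self_mem_Ici⟩ ⟨hz, haz.le⟩ haz hR

theorem ConvexOn.le_of_hasDerivWithinAt_Iio_of_hasDerivWithinAt_Ioi {s : Set ℝ} {f : ℝ → ℝ}
    {a L R : ℝ} (hf : ConvexOn ℝ s f) (ha : a ∈ interior s)
    (hL : HasDerivWithinAt f L (Iio a) a) (hR : HasDerivWithinAt f R (Ioi a) a) : L ≤ R := by
  rw [← hL.derivWithin (uniqueDiffWithinAt_Iio a), ← hR.derivWithin (uniqueDiffWithinAt_Ioi a)]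
  exact hf.leftDeriv_le_rightDeriv_of_mem_interior ha

def pieceDomain (m : ℕ) (t : ℕ → ℝ) (i : ℕ) : Set ℝ :=
  {x | (1 < i → t (i - 1) ≤ x) ∧ (i < m → x ≤ t i)}

/-- For `1 ≤ k ≤ m`, the union of the first `k` pieces. -/
def pieceDomainsUpTo (m : ℕ) (t : ℕ → ℝ) (k : ℕ) : Set ℝ :=
  {x | k < m → x ≤ t k}

section Breakpoints

variable {m : ℕ} {t : ℕ → ℝ}

theorem convex_pieceDomain (i : ℕ) : Convex ℝ (pieceDomain m t i) :=
  convex_iff_ordConnected.mpr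
    ⟨fun _ hx _ hy _ hz => ⟨fun h => (hx.1 h).trans hz.1, fun h => hz.2.trans (hy.2 h)⟩⟩

theorem convex_pieceDomainsUpTo (k : ℕ) : Convex ℝ (pieceDomainsUpTo m t k) :=
  convex_iff_ordConnected.mpr ⟨fun _ _ _ hy _ hz h => hz.2.trans (hy h)⟩

theorem pieceDomain_mem_nhdsLE (hmono : ∀ i, 1 ≤ i → i + 1 ≤ m - 1 → t i < t (i + 1))
    {i : ℕ} (hi : 1 ≤ i) (him : i < m) : pieceDomain m t i ∈ 𝓝[≤] t i := by
  rcases hi.eq_or_lt with rfl | hi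
  · exact mem_of_superset self_mem_nhdsWithin fun x hx => ⟨fun h => absurd h (lt_irrefl 1),
      fun _ => hx⟩
  · have hlt : t (i - 1) < t i := by
      simpa [Nat.sub_add_cancel hi.le] using hmono (i - 1) (by omega) (by omega)
    exact mem_of_superset (Icc_mem_nhdsLE hlt) fun x hx => ⟨fun _ => hx.1, fun _ => hx.2⟩

theorem pieceDomain_succ_mem_nhdsGE (hmono : ∀ i, 1 ≤ i → i + 1 ≤ m - 1 → t i < t (i + 1))
    {i : ℕ} (hi : 1 ≤ i) (him : i < m) : pieceDomain m t (i + 1) ∈ 𝓝[≥] t i := by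
  rcases (Nat.succ_le_of_lt him).eq_or_lt with hlast | hnext
  · exact mem_of_superset self_mem_nhdsWithin fun x hx => ⟨fun _ => hx, fun h => by omega⟩
  · exact mem_of_superset (Icc_mem_nhdsGE (hmono i hi (by omega))) fun x hx =>
      ⟨fun _ => hx.1, fun _ => hx.2⟩

theorem pieceDomainsUpTo_one : pieceDomainsUpTo m t 1 = pieceDomain m t 1 := by
  ext x
  simp [pieceDomainsUpTo, pieceDomain]

theorem pieceDomainsUpTo_self : pieceDomainsUpTo m t m = univ := by
  ext x
  simp [pieceDomainsUpTo]

theorem pieceDomainsUpTo_succ_inter_Iic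
    (hmono : ∀ i, 1 ≤ i → i + 1 ≤ m - 1 → t i < t (i + 1)) {k : ℕ} (hk : 1 ≤ k) (hkm : k < m) :
    pieceDomainsUpTo m t (k + 1) ∩ Iic (t k) = pieceDomainsUpTo m t k := by
  ext x
  refine ⟨fun hx _ => hx.2, fun hx => ⟨fun h => ?_, hx hkm⟩⟩
  exact (hx hkm).trans (hmono k hk (by omega)).le

theorem pieceDomainsUpTo_succ_inter_Ici {k : ℕ} (hk : 1 ≤ k) :
    pieceDomainsUpTo m t (k + 1) ∩ Ici (t k) = pieceDomain m t (k + 1) := by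
  ext x
  simp only [pieceDomainsUpTo, pieceDomain, mem_inter_iff, mem_ofPred_eq, mem_Ici,
    Nat.add_sub_cancel]
  exact ⟨fun hx => ⟨fun _ => hx.2, hx.1⟩, fun hx => ⟨hx.2, hx.1 (by omega)⟩⟩

end Breakpoints

section Piecewise

variable {m : ℕ} {t : ℕ → ℝ} {p : ℕ → ℝ → ℝ} {f : ℝ → ℝ}

theorem hasDerivWithinAt_Iio_breakpoint (hmono : ∀ i, 1 ≤ i → i + 1 ≤ m - 1 → t i < t (i + 1))
    (hf : ∀ i, 1 ≤ i → i ≤ m → ∀ x ∈ pieceDomain m t i, f x = p i x)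
    {i : ℕ} (hi : 1 ≤ i) (him : i < m) (hp : DifferentiableAt ℝ (p i) (t i)) :
    HasDerivWithinAt f (deriv (p i) (t i)) (Iio (t i)) (t i) :=
  (hp.hasDerivAt.hasDerivWithinAt.congr_of_eventuallyEq_of_mem
    (eventually_of_mem (pieceDomain_mem_nhdsLE hmono hi him) (hf i hi him.le))
    self_mem_Iic).mono Iio_subset_Iic_self

theorem hasDerivWithinAt_Ioi_breakpoint (hmono : ∀ i, 1 ≤ i → i + 1 ≤ m - 1 → t i < t (i + 1))
    (hf : ∀ i, 1 ≤ i → i ≤ m → ∀ x ∈ pieceDomain m t i, f x = p i x)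
    {i : ℕ} (hi : 1 ≤ i) (him : i < m) (hp : DifferentiableAt ℝ (p (i + 1)) (t i)) :
    HasDerivWithinAt f (deriv (p (i + 1)) (t i)) (Ioi (t i)) (t i) :=
  (hp.hasDerivAt.hasDerivWithinAt.congr_of_eventuallyEq_of_mem
    (eventually_of_mem (pieceDomain_succ_mem_nhdsGE hmono hi him) (hf (i + 1) (by omega) him))
    self_mem_Ici).mono Ioi_subset_Ici_self

theorem convexOn_univ_of_convexOn_pieceDomain
    (hmono : ∀ i, 1 ≤ i → i + 1 ≤ m - 1 → t i < t (i + 1)) (hm : 1 ≤ m)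
    (hp : ∀ i, Differentiable ℝ (p i))
    (hf : ∀ i, 1 ≤ i → i ≤ m → ∀ x ∈ pieceDomain m t i, f x = p i x)
    (hconv : ∀ i, 1 ≤ i → i ≤ m → ConvexOn ℝ (pieceDomain m t i) (p i))
    (hderiv : ∀ i, 1 ≤ i → i ≤ m - 1 → deriv (p i) (t i) ≤ deriv (p (i + 1)) (t i)) :
    ConvexOn ℝ univ f := by
  have hpiece : ∀ i, 1 ≤ i → i ≤ m → ConvexOn ℝ (pieceDomain m t i) f := fun i hi him =>
    (hconv i hi him).congr fun x hx => (hf i hi him x hx).symm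
  suffices ∀ k, 1 ≤ k → k ≤ m → ConvexOn ℝ (pieceDomainsUpTo m t k) f by
    simpa only [pieceDomainsUpTo_self] using this m hm le_rfl
  intro k hk
  induction k, hk using Nat.le_induction with
  | base => exact fun _ => pieceDomainsUpTo_one (m := m) (t := t) ▸ hpiece 1 le_rfl hm
  | succ k hk ih =>
    intro hkm
    have hIic := pieceDomainsUpTo_succ_inter_Iic hmono hk hkm
    have hmem : t k ∈ pieceDomainsUpTo m t (k + 1) := (hIic.ge fun _ => le_rfl).1
    refine convexOn_of_convexOn_inter_Iic_Ici_of_hasDerivWithinAt (convex_pieceDomainsUpTo _)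
      hmem (hIic ▸ ih (by omega))
      (pieceDomainsUpTo_succ_inter_Ici hk ▸ hpiece (k + 1) (by omega) hkm)
      (hasDerivWithinAt_Iio_breakpoint hmono hf hk hkm (hp k).differentiableAt)
      (hasDerivWithinAt_Ioi_breakpoint hmono hf hk hkm (hp (k + 1)).differentiableAt)
      (hderiv k hk (by omega))

end Piecewise

theorem piecewise_cubic_convex_iff_general (m : ℕ) (hm : 1 ≤ m)
    (a b c d : ℕ → ℝ) (p : ℕ → ℝ → ℝ)
    (hp : ∀ i x, p i x = a i * x ^ 3 + b i * x ^ 2 + c i * x + d i)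
    (t : ℕ → ℝ) (hmono : ∀ i, 1 ≤ i → i + 1 ≤ m - 1 → t i < t (i + 1))
    (D : ℕ → Set ℝ)
    (hD : ∀ i, D i = {x : ℝ | (1 < i → t (i - 1) ≤ x) ∧ (i < m → x ≤ t i)})
    (f : ℝ → ℝ)
    (hf : ∀ i, 1 ≤ i → i ≤ m → ∀ x ∈ D i, f x = p i x) :
    ConvexOn ℝ Set.univ f ↔
      ((∀ i, 1 ≤ i → i ≤ m → ConvexOn ℝ (D i) (p i)) ∧
        (∀ i, 1 ≤ i → i ≤ m - 1 → deriv (p i) (t i) ≤ deriv (p (i + 1)) (t i))) := by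
  obtain rfl : D = pieceDomain m t := funext hD
  have hdiff : ∀ i, Differentiable ℝ (p i) := fun i => by
    rw [show p i = _ from funext (hp i)]
    fun_prop
  refine ⟨fun hconv => ⟨fun i hi him => ?_, fun i hi him => ?_⟩,
    fun ⟨hpiece, hderiv⟩ => convexOn_univ_of_convexOn_pieceDomain hmono hm hdiff hf hpiece hderiv⟩
  · exact (hconv.subset (subset_univ _) (convex_pieceDomain i)).congr (hf i hi him)
  · have him' : i < m := by omega
    exact hconv.le_of_hasDerivWithinAt_Iio_of_hasDerivWithinAt_Ioi (by simp)
      (hasDerivWithinAt_Iio_breakpoint hmono hf hi him' (hdiff i).differentiableAt)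
      (hasDerivWithinAt_Ioi_breakpoint hmono hf hi him' (hdiff (i + 1)).differentiableAt)

/-- A continuous piecewise cubic function with pieces `p 1, …, p m` separated by
breakpoints `t 1 < ⋯ < t (m-1)` is convex iff each piece is convex on its subdomain
and the one-sided derivatives satisfy `pᵢ'(tᵢ) ≤ pᵢ₊₁'(tᵢ)` at each breakpoint. -/
theorem piecewise_cubic_convex_iff (m : ℕ) (hm : 1 ≤ m)
    (a b c d : ℕ → ℝ) (p : ℕ → ℝ → ℝ)
    (hp : ∀ i x, p i x = a i * x ^ 3 + b i * x ^ 2 + c i * x + d i)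
    (t : ℕ → ℝ) (hmono : ∀ i, 1 ≤ i → i + 1 ≤ m - 1 → t i < t (i + 1))
    (hcont : ∀ i, 1 ≤ i → i ≤ m - 1 → p i (t i) = p (i + 1) (t i))
    (D : ℕ → Set ℝ)
    (hD : ∀ i, D i = {x : ℝ | (1 < i → t (i - 1) ≤ x) ∧ (i < m → x ≤ t i)})
    (f : ℝ → ℝ)
    (hf : ∀ i, 1 ≤ i → i ≤ m → ∀ x ∈ D i, f x = p i x) :
    ConvexOn ℝ Set.univ f ↔
      ((∀ i, 1 ≤ i → i ≤ m → ConvexOn ℝ (D i) (p i)) ∧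
        (∀ i, 1 ≤ i → i ≤ m - 1 → deriv (p i) (t i) ≤ deriv (p (i + 1)) (t i))) :=
  piecewise_cubic_convex_iff_general m hm a b c d p hp t hmono D hD f hf
end
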